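/- arXiv:1103.5335 — 7 statements merged into one kernel-verified Lean document; each statement's English description precedes it below -/
import Mathlib

section
/- If x(t) solves ẋ = f(x) in a Hilbert space X, then the image (χ(t), z(t)) = P(x(t)) under the Poincaré transformation satisfies χ̇ = f_z(χ) − ⟨f_z(χ), χ⟩χ and ż = −⟨f_z(χ), χ⟩z, where f_z(χ) := z f(z⁻¹χ), as long as z(t) > 0. -/
/-!
Write `z = (⟪x, x⟫ + 1)^(-1/2)`. The chain rule gives `ż = -⟪ẋ, x⟫ z³`, and the product rule
applied to `χ = z • x` gives `χ̇ = z • ẋ + ż • x`. Since `z⁻¹ • χ = x`, the rescaled field is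
`f_z(χ) = z • ẋ`, so `⟪f_z(χ), χ⟫ = z² ⟪ẋ, x⟫` and both derivatives take the claimed form.
-/

open RealInnerProductSpace

section
variable {X : Type*} [NormedAddCommGroup X] [InnerProductSpace ℝ X]

/-- The last coordinate `z` of the Poincaré map `P(y) = (y, 1) / √(⟪y, y⟫ + 1)`; its first
coordinate is `poincareHeight y • y`. -/
noncomputable def poincareHeight (y : X) : ℝ :=
  (√(⟪y, y⟫ + 1))⁻¹

lemma inner_self_add_one_pos (y : X) : 0 < ⟪y, y⟫ + 1 := by
  linarith [real_inner_self_nonneg (x := y)]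

lemma poincareHeight_pos (y : X) : 0 < poincareHeight y :=
  inv_pos.mpr (Real.sqrt_pos.mpr (inner_self_add_one_pos y))

lemma poincareHeight_inv_smul_smul (y : X) :
    (poincareHeight y)⁻¹ • (poincareHeight y • y) = y :=
  inv_smul_smul₀ (poincareHeight_pos y).ne' y

variable {x : ℝ → X} {v : X} {t : ℝ}

lemma hasDerivAt_poincareHeight (hx : HasDerivAt x v t) :
    HasDerivAt (fun s => poincareHeight (x s)) (-⟪v, x t⟫ * poincareHeight (x t) ^ 3) t := by
  have hA := inner_self_add_one_pos (x t)
  have hr := Real.sqrt_pos.mpr hA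
  refine ((((hx.inner ℝ hx).add_const 1).sqrt hA.ne').inv hr.ne').congr_deriv ?_
  rw [real_inner_comm (x t) v, poincareHeight]
  field_simp
  ring

lemma hasDerivAt_poincare (hx : HasDerivAt x v t) :
    let z := poincareHeight (x t)
    HasDerivAt (fun s => poincareHeight (x s) • x s) (z • v - ⟪z • v, z • x t⟫ • z • x t) t ∧
      HasDerivAt (fun s => poincareHeight (x s)) (-⟪z • v, z • x t⟫ * z) t := by
  intro z
  have hinner : ⟪z • v, z • x t⟫ = ⟪v, x t⟫ * z ^ 2 := by
    rw [real_inner_smul_left, real_inner_smul_right]; ring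
  have hz := hasDerivAt_poincareHeight hx
  refine ⟨?_, ?_⟩
  · refine (hz.smul hx).congr_deriv ?_
    rw [hinner, smul_smul, sub_eq_add_neg, ← neg_smul]
    congr 2; ring
  · refine hz.congr_deriv ?_
    rw [hinner]; ring

end

theorem poincare_transformed_vector_field_general
    (X : Type*) [NormedAddCommGroup X] [InnerProductSpace ℝ X]
    (f : X → X) (x : ℝ → X)
    (hx : ∀ t, HasDerivAt x (f (x t)) t)
    (χ : ℝ → X) (z : ℝ → ℝ)
    (hχ : ∀ t, χ t = (Real.sqrt ((inner ℝ (x t) (x t) : ℝ) + 1))⁻¹ • x t)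
    (hz : ∀ t, z t = (Real.sqrt ((inner ℝ (x t) (x t) : ℝ) + 1))⁻¹)
    (fz : ℝ → X → X) (hfz : ∀ w χ', fz w χ' = w • f (w⁻¹ • χ'))
    (t : ℝ) :
    HasDerivAt χ (fz (z t) (χ t) - (inner ℝ (fz (z t) (χ t)) (χ t) : ℝ) • χ t) t ∧
    HasDerivAt z (-(inner ℝ (fz (z t) (χ t)) (χ t) : ℝ) * z t) t := by
  obtain rfl : z = fun s => poincareHeight (x s) := funext hz
  obtain rfl : χ = fun s => poincareHeight (x s) • x s := funext hχ
  have hfz_eq : fz (poincareHeight (x t)) (poincareHeight (x t) • x t)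
      = poincareHeight (x t) • f (x t) := by
    rw [hfz, poincareHeight_inv_smul_smul]
  rw [hfz_eq]
  exact hasDerivAt_poincare (hx t)

/-- If `x(t)` solves `ẋ = f(x)` in a Hilbert space `X`, then the image
`(χ(t), z(t)) = P(x(t))` under the Poincaré transformation satisfies
`χ̇ = f_z(χ) − ⟨f_z(χ), χ⟩χ` and `ż = −⟨f_z(χ), χ⟩ z`, where
`f_z(χ) := z • f(z⁻¹ • χ)` (note `z(t) > 0` always holds). -/
theorem poincare_transformed_vector_field
    (X : Type*) [NormedAddCommGroup X] [InnerProductSpace ℝ X]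
    (f : X → X) (x : ℝ → X)
    (hx : ∀ t, HasDerivAt x (f (x t)) t)
    (χ : ℝ → X) (z : ℝ → ℝ)
    (hχ : ∀ t, χ t = (Real.sqrt ((inner ℝ (x t) (x t) : ℝ) + 1))⁻¹ • x t)
    (hz : ∀ t, z t = (Real.sqrt ((inner ℝ (x t) (x t) : ℝ) + 1))⁻¹)
    (fz : ℝ → X → X) (hfz : ∀ w χ', fz w χ' = w • f (w⁻¹ • χ'))
    (t : ℝ) (hzt : 0 < z t) :
    HasDerivAt χ (fz (z t) (χ t) - (inner ℝ (fz (z t) (χ t)) (χ t) : ℝ) • χ t) t ∧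
    HasDerivAt z (-(inner ℝ (fz (z t) (χ t)) (χ t) : ℝ) * z t) t :=
  poincare_transformed_vector_field_general X f x hx χ z hχ hz fz hfz t
end

section
/- For a flow on a compact metric space M and a closed invariant set S, if K is a compact neighborhood with K ∩ S = ∅ and Inv(K) = S_comp, then for every compact neighborhood K' with K ⊆ K' and K' ∩ S = ∅, one has Inv(K') = S_comp. -/
open Filter Set Topology

noncomputable section

/-- ω-limit set of a point under a flow `φ`. -/
def omegaSet {M : Type*} [TopologicalSpace M] (φ : ℝ → M → M) (x : M) : Set M :=
  {y | ∃ u : ℕ → ℝ, Tendsto u atTop atTop ∧ Tendsto (fun k => φ (u k) x) atTop (nhds y)}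

/-- α-limit set of a point under a flow `φ`. -/
def alphaSet {M : Type*} [TopologicalSpace M] (φ : ℝ → M → M) (x : M) : Set M :=
  {y | ∃ u : ℕ → ℝ, Tendsto u atTop atBot ∧ Tendsto (fun k => φ (u k) x) atTop (nhds y)}

/-- The dynamical complement of an invariant set `S`. -/
def dynComp {M : Type*} [TopologicalSpace M] (φ : ℝ → M → M) (S : Set M) : Set M :=
  {x | alphaSet φ x ∩ S = ∅ ∧ omegaSet φ x ∩ S = ∅}

/-- The maximal invariant subset of `K`. -/
def maxInv {M : Type*} (φ : ℝ → M → M) (K : Set M) : Set M :=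
  {x ∈ K | ∀ t : ℝ, φ t x ∈ K}

/-- For a flow on a compact metric space and a closed invariant set `S`: if `K`
is a compact neighborhood with `K ∩ S = ∅` and `Inv(K) = S_comp`, then every
compact neighborhood `K'` with `K ⊆ K'` and `K' ∩ S = ∅` also satisfies
`Inv(K') = S_comp`. -/
theorem maxInv_eq_dynComp_of_larger_nbhd
    {M : Type*} [MetricSpace M] [CompactSpace M] (φ : ℝ → M → M)
    (hcont : Continuous fun q : ℝ × M => φ q.1 q.2)
    (hφ0 : ∀ x, φ 0 x = x)
    (hφadd : ∀ s t : ℝ, ∀ x, φ s (φ t x) = φ (s + t) x)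
    (S : Set M) (hScl : IsClosed S) (hSinv : ∀ t : ℝ, ∀ x ∈ S, φ t x ∈ S)
    (K : Set M) (hKcomp : IsCompact K) (hKnbhd : K = closure (interior K))
    (hKS : K ∩ S = ∅) (hKinv : maxInv φ K = dynComp φ S)
    (K' : Set M) (hK'comp : IsCompact K') (hK'nbhd : K' = closure (interior K'))
    (hKK' : K ⊆ K') (hK'S : K' ∩ S = ∅) :
    maxInv φ K' = dynComp φ S := by
  have hK'cl : IsClosed K' := hK'comp.isClosed
  ext x
  constructor
  · rintro ⟨hxK', hall⟩
    constructor
    · apply Set.eq_empty_iff_forall_notMem.2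
      rintro y ⟨⟨u, _, hconv⟩, hyS⟩
      have hyK' : y ∈ K' :=
        hK'cl.mem_of_tendsto hconv (Filter.Eventually.of_forall fun k => hall (u k))
      exact Set.eq_empty_iff_forall_notMem.1 hK'S y ⟨hyK', hyS⟩
    · apply Set.eq_empty_iff_forall_notMem.2
      rintro y ⟨⟨u, _, hconv⟩, hyS⟩
      have hyK' : y ∈ K' :=
        hK'cl.mem_of_tendsto hconv (Filter.Eventually.of_forall fun k => hall (u k))
      exact Set.eq_empty_iff_forall_notMem.1 hK'S y ⟨hyK', hyS⟩
  · intro hx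
    have hxK : x ∈ maxInv φ K := hKinv ▸ hx
    exact ⟨hKK' hxK.1, fun t => hKK' (hxK.2 t)⟩
end
end

section
/- Conversely, if the dynamical complement S_comp of a closed invariant set S is isolated invariant, then there exists a compact neighborhood K disjoint from S, isolating S_comp, such that every compact neighborhood K' ⊇ K disjoint from S is also isolating. -/
open Filter Set Topology

noncomputable section

/-- Conversely: if the dynamical complement `S_comp` of a closed invariant set
`S` is isolated invariant, then there exists a compact neighborhood `K`
disjoint from `S` isolating `S_comp`, such that every compact neighborhood
`K' ⊇ K` disjoint from `S` is also an isolating neighborhood. -/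
theorem exists_nbhd_of_dynComp_isolated
    {M : Type*} [MetricSpace M] [CompactSpace M] (φ : ℝ → M → M)
    (hcont : Continuous fun q : ℝ × M => φ q.1 q.2)
    (hφ0 : ∀ x, φ 0 x = x)
    (hφadd : ∀ s t : ℝ, ∀ x, φ s (φ t x) = φ (s + t) x)
    (S : Set M) (hScl : IsClosed S) (hSinv : ∀ t : ℝ, ∀ x ∈ S, φ t x ∈ S)
    (hiso : ∃ N : Set M, IsCompact N ∧ N = closure (interior N) ∧
      maxInv φ N ⊆ interior N ∧ maxInv φ N = dynComp φ S) :
    ∃ K : Set M, IsCompact K ∧ K = closure (interior K) ∧ K ∩ S = ∅ ∧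
      maxInv φ K ⊆ interior K ∧ maxInv φ K = dynComp φ S ∧
      ∀ K' : Set M, IsCompact K' → K' = closure (interior K') → K ⊆ K' →
        K' ∩ S = ∅ → maxInv φ K' ⊆ interior K' := by
  classical
  obtain ⟨N, hNcomp, -, -, hNmax⟩ := hiso
  set C := dynComp φ S with hCdef
  -- maxInv of any closed set disjoint from S is contained in C
  have key : ∀ K : Set M, IsClosed K → K ∩ S = ∅ → maxInv φ K ⊆ C := by
    intro K hKcl hKS x hx
    constructor
    · rw [eq_empty_iff_forall_notMem]
      rintro y ⟨⟨u, -, hconv⟩, hyS⟩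
      have hyK : y ∈ K := hKcl.mem_of_tendsto hconv
        (Eventually.of_forall fun k => hx.2 (u k))
      exact absurd (mem_inter hyK hyS) (eq_empty_iff_forall_notMem.mp hKS y)
    · rw [eq_empty_iff_forall_notMem]
      rintro y ⟨⟨u, -, hconv⟩, hyS⟩
      have hyK : y ∈ K := hKcl.mem_of_tendsto hconv
        (Eventually.of_forall fun k => hx.2 (u k))
      exact absurd (mem_inter hyK hyS) (eq_empty_iff_forall_notMem.mp hKS y)
  -- C is invariant
  have hCinv : ∀ t : ℝ, ∀ x ∈ C, φ t x ∈ C := by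
    intro t x hx
    constructor
    · rw [eq_empty_iff_forall_notMem]
      rintro y ⟨⟨u, hu, hconv⟩, hyS⟩
      have : y ∈ alphaSet φ x ∩ S := by
        refine ⟨⟨fun k => u k + t, ?_, ?_⟩, hyS⟩
        · exact tendsto_atBot_add_const_right _ t hu
        · simpa [hφadd] using hconv
      rw [hx.1] at this; exact this
    · rw [eq_empty_iff_forall_notMem]
      rintro y ⟨⟨u, hu, hconv⟩, hyS⟩
      have : y ∈ omegaSet φ x ∩ S := by
        refine ⟨⟨fun k => u k + t, ?_, ?_⟩, hyS⟩
        · exact tendsto_atTop_add_const_right _ t hu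
        · simpa [hφadd] using hconv
      rw [hx.2] at this; exact this
  -- C is closed (hence compact)
  have hmaxeq : maxInv φ N = ⋂ t : ℝ, (fun x => φ t x) ⁻¹' N := by
    ext x
    simp only [maxInv, mem_setOf_eq, mem_iInter, mem_preimage]
    constructor
    · rintro ⟨-, h⟩ t; exact h t
    · intro h; exact ⟨by simpa [hφ0] using h 0, h⟩
  have hCcl : IsClosed C := by
    rw [← hNmax, hmaxeq]
    exact isClosed_iInter fun t =>
      (hNcomp.isClosed).preimage (hcont.comp (continuous_const.prodMk continuous_id))
  -- C ∩ S = ∅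
  have hCS : C ∩ S = ∅ := by
    rw [eq_empty_iff_forall_notMem]
    rintro x ⟨hxC, hxS⟩
    obtain ⟨y, -, ψ, hψ, hconv⟩ := isCompact_univ.tendsto_subseq
      (x := fun n : ℕ => φ (n : ℝ) x) (fun n => mem_univ _)
    have hyS : y ∈ S := hScl.mem_of_tendsto hconv
      (Eventually.of_forall fun k => hSinv _ _ hxS)
    have : y ∈ omegaSet φ x ∩ S := by
      refine ⟨⟨fun k => (ψ k : ℝ), ?_, hconv⟩, hyS⟩
      exact tendsto_natCast_atTop_atTop.comp hψ.tendsto_atTop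
    rw [hxC.2] at this; exact this
  -- disjoint closed thickenings of C and S
  have hdisj : Disjoint C S := disjoint_iff_inter_eq_empty.mpr hCS
  obtain ⟨δ, hδpos, hδ⟩ := hdisj.exists_cthickenings hCcl.isCompact hScl
  refine ⟨closure (Metric.thickening δ C), ?_, ?_, ?_, ?_, ?_, ?_⟩
  · exact isClosed_closure.isCompact
  · refine subset_antisymm ?_ ?_
    · exact closure_mono (subset_trans
        (Metric.isOpen_thickening.subset_interior_iff.mpr subset_closure) subset_rfl)
    · exact closure_minimal interior_subset isClosed_closure
  · rw [eq_empty_iff_forall_notMem]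
    rintro x ⟨hx1, hx2⟩
    exact Set.disjoint_left.mp hδ (Metric.closure_thickening_subset_cthickening δ C hx1)
      (Metric.self_subset_cthickening S hx2)
  · -- maxInv ⊆ interior
    intro x hx
    have hxC : x ∈ C := key _ isClosed_closure
      (by rw [eq_empty_iff_forall_notMem]; rintro z ⟨hz1, hz2⟩
          exact Set.disjoint_left.mp hδ
            (Metric.closure_thickening_subset_cthickening δ C hz1)
            (Metric.self_subset_cthickening S hz2)) hx
    have h1 : Metric.thickening δ C ⊆ interior (closure (Metric.thickening δ C)) :=
      Metric.isOpen_thickening.subset_interior_iff.mpr subset_closure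
    exact h1 (Metric.self_subset_thickening hδpos C hxC)
  · -- maxInv = C
    apply subset_antisymm
    · exact key _ isClosed_closure
        (by rw [eq_empty_iff_forall_notMem]; rintro z ⟨hz1, hz2⟩
            exact Set.disjoint_left.mp hδ
              (Metric.closure_thickening_subset_cthickening δ C hz1)
              (Metric.self_subset_cthickening S hz2))
    · intro x hx
      exact ⟨subset_closure (Metric.self_subset_thickening hδpos C hx),
        fun t => subset_closure (Metric.self_subset_thickening hδpos C (hCinv t x hx))⟩
  · intro K' hK'comp _ hKK' hK'S x hx
    have hxC : x ∈ C := key _ hK'comp.isClosed hK'S hx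
    have h1 : Metric.thickening δ C ⊆ interior K' :=
      Metric.isOpen_thickening.subset_interior_iff.mpr
        (subset_closure.trans hKK')
    exact h1 (Metric.self_subset_thickening hδpos C hxC)
end
end

section
/- (Existence theorem, repeller case.) Let S be a closed invariant set on the compact Poincaré hemisphere with isolated invariant dynamical complement S_comp. If S_comp admits an index pair (B,∅) (so the Conley index at infinity ĥ(S) is of a repeller), then there exists x ∈ H \ (S ∪ S_comp) with α(x) ∩ S ≠ ∅ and ω(x) ⊆ S_comp, and there is no trajectory from S_comp to S (no x with α(x) ⊆ S_comp and ω(x) ∩ S ≠ ∅, x ∉ S_comp). -/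
open Filter Set Topology

noncomputable section

/-- Existence theorem, repeller case: if the isolated invariant dynamical
complement `S_comp` of the closed invariant set `S` admits an index pair
`(B, ∅)` — an isolating block `B`, disjoint from `S`, with empty exit set
(i.e. positively invariant), so that `ĥ(S)` is the index of a repeller — then
there are trajectories `S → S_comp` but no trajectory `S_comp → S`. -/
theorem existence_repeller_case
    {M : Type*} [MetricSpace M] [CompactSpace M] (φ : ℝ → M → M)
    (hcont : Continuous fun q : ℝ × M => φ q.1 q.2)
    (hφ0 : ∀ x, φ 0 x = x)
    (hφadd : ∀ s t : ℝ, ∀ x, φ s (φ t x) = φ (s + t) x)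
    (S : Set M) (hScl : IsClosed S) (hSinv : ∀ t : ℝ, ∀ x ∈ S, φ t x ∈ S)
    (hSne : S.Nonempty) (hcompne : (dynComp φ S).Nonempty)
    (B : Set M) (hBcomp : IsCompact B) (hBnbhd : B = closure (interior B))
    (hBiso : dynComp φ S ⊆ interior B) (hBinv : maxInv φ B = dynComp φ S)
    (hBS : B ∩ S = ∅)
    (hBfwd : ∀ x ∈ B, ∀ t : ℝ, 0 ≤ t → φ t x ∈ B)
    (hBne : (B \ dynComp φ S).Nonempty) :
    (∃ x : M, x ∉ S ∧ x ∉ dynComp φ S ∧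
      (alphaSet φ x ∩ S).Nonempty ∧ omegaSet φ x ⊆ dynComp φ S) ∧
    ¬ ∃ x : M, x ∉ dynComp φ S ∧
      alphaSet φ x ⊆ dynComp φ S ∧ (omegaSet φ x ∩ S).Nonempty := by
  have hct : ∀ t : ℝ, Continuous fun z : M => φ t z := fun t =>
    hcont.comp (continuous_const.prodMk continuous_id)
  -- ω-limit sets of points of B stay in B
  have homB : ∀ x ∈ B, omegaSet φ x ⊆ B := by
    intro x hx y hy
    obtain ⟨u, hu, hconv⟩ := hy
    have hev : ∀ᶠ k in atTop, φ (u k) x ∈ B := by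
      filter_upwards [hu.eventually_ge_atTop 0] with k hk
      exact hBfwd x hx (u k) hk
    exact hBcomp.isClosed.mem_of_tendsto hconv hev
  -- ω-limit sets are invariant
  have hominv : ∀ x : M, ∀ t : ℝ, ∀ y ∈ omegaSet φ x, φ t y ∈ omegaSet φ x := by
    rintro x t y ⟨u, hu, hconv⟩
    refine ⟨fun k => t + u k, tendsto_atTop_add_const_left _ t hu, ?_⟩
    have := ((hct t).tendsto y).comp hconv
    simpa only [Function.comp_def, hφadd] using this
  -- hence ω-limit sets of points of B lie in the maximal invariant set
  have homc : ∀ x ∈ B, omegaSet φ x ⊆ dynComp φ S := by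
    intro x hx
    rw [← hBinv]
    intro y hy
    exact ⟨homB x hx hy, fun t => homB x hx (hominv x t y hy)⟩
  constructor
  · obtain ⟨x, hxB, hxc⟩ := hBne
    have hxS : x ∉ S := fun h => (eq_empty_iff_forall_notMem.mp hBS x) ⟨hxB, h⟩
    have homS : omegaSet φ x ∩ S = ∅ := by
      apply eq_empty_iff_forall_notMem.mpr
      rintro y ⟨hy, hyS⟩
      exact (eq_empty_iff_forall_notMem.mp hBS y) ⟨homB x hxB hy, hyS⟩
    have hαS : (alphaSet φ x ∩ S).Nonempty := by
      by_contra h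
      exact hxc ⟨not_nonempty_iff_eq_empty.mp h, homS⟩
    exact ⟨x, hxS, hxc, hαS, homc x hxB⟩
  · rintro ⟨x, hxc, hα, hωS⟩
    -- the α-limit set of x is nonempty by compactness
    obtain ⟨y, -, ψ, hψ, hconv⟩ := isCompact_univ.tendsto_subseq
      (fun n : ℕ => mem_univ (φ (-(n : ℝ)) x))
    have hconv' : Tendsto (fun k => φ (-(ψ k : ℝ)) x) atTop (nhds y) := hconv
    have huBot : Tendsto (fun k => (-(ψ k : ℝ))) atTop atBot :=
      tendsto_neg_atTop_atBot.comp
        (tendsto_natCast_atTop_atTop.comp hψ.tendsto_atTop)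
    have hyα : y ∈ alphaSet φ x := ⟨fun k => -(ψ k : ℝ), huBot, hconv'⟩
    have hyB : y ∈ interior B := hBiso (hα hyα)
    -- eventually the backward orbit enters B; then x ∈ B by forward invariance
    have hev : ∀ᶠ k in atTop, φ (-(ψ k : ℝ)) x ∈ interior B :=
      hconv'.eventually (isOpen_interior.eventually_mem hyB)
    obtain ⟨k, hk⟩ := hev.exists
    have hxB : x ∈ B := by
      have := hBfwd _ (interior_subset hk) (ψ k : ℝ) (by positivity)
      rwa [hφadd, add_neg_cancel, hφ0] at this
    obtain ⟨z, hzω, hzS⟩ := hωS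
    exact (eq_empty_iff_forall_notMem.mp hBS z) ⟨homB x hxB hzω, hzS⟩
end
end

section
/- (Existence theorem, attractor case.) Let S be a closed invariant set on the compact Poincaré hemisphere with isolated invariant dynamical complement S_comp. If S_comp admits an isolating block B with exit set all of ∂B, and B \ S_comp ≠ ∅, then there exists x ∉ S ∪ S_comp with α(x) ⊆ S_comp and ω(x) ∩ S ≠ ∅, and no trajectory goes from S to S_comp. -/
open Filter Set Topology

noncomputable section

private lemma flow_cont {M : Type*} [TopologicalSpace M] {φ : ℝ → M → M}
    (hcont : Continuous fun q : ℝ × M => φ q.1 q.2) (t : ℝ) :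
    Continuous fun x => φ t x :=
  hcont.comp (continuous_const.prodMk continuous_id)

private lemma alpha_inv {M : Type*} [TopologicalSpace M] {φ : ℝ → M → M}
    (hcont : Continuous fun q : ℝ × M => φ q.1 q.2)
    (hφadd : ∀ s t : ℝ, ∀ x, φ s (φ t x) = φ (s + t) x)
    {x y : M} (hy : y ∈ alphaSet φ x) (t : ℝ) : φ t y ∈ alphaSet φ x := by
  obtain ⟨u, hu, hconv⟩ := hy
  refine ⟨fun k => t + u k, tendsto_atBot_add_const_left atTop t hu, ?_⟩
  have h1 : Tendsto (fun k => φ t (φ (u k) x)) atTop (nhds (φ t y)) :=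
    ((flow_cont hcont t).tendsto y).comp hconv
  simpa [hφadd] using h1

private lemma alpha_sub {M : Type*} [MetricSpace M] {φ : ℝ → M → M}
    {B : Set M} (hBcl : IsClosed B) {x : M} {t0 : ℝ}
    (h : ∀ r : ℝ, r ≤ t0 → φ r x ∈ B) : alphaSet φ x ⊆ B := by
  rintro y ⟨u, hu, hconv⟩
  refine hBcl.mem_of_tendsto hconv ?_
  filter_upwards [hu.eventually (eventually_le_atBot t0)] with k hk
  exact h (u k) hk

private lemma omega_nonempty {M : Type*} [MetricSpace M] [CompactSpace M]
    (φ : ℝ → M → M) (x : M) : (omegaSet φ x).Nonempty := by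
  obtain ⟨y, -, σ, hσ, hconv⟩ :=
    isCompact_univ.tendsto_subseq (x := fun n : ℕ => φ (n : ℝ) x) (fun n => mem_univ _)
  exact ⟨y, fun k => (σ k : ℝ),
    tendsto_natCast_atTop_atTop.comp hσ.tendsto_atTop, hconv⟩

/-- Existence theorem, attractor case: if the isolated invariant dynamical
complement `S_comp` of the closed invariant set `S` admits an isolating block
`B`, disjoint from `S`, whose entire boundary is exit set (i.e. `B` is
negatively invariant; `ĥ(S)` is the index of an attractor), and
`B \ S_comp ≠ ∅`, then there are trajectories `S_comp → S` but no trajectory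
`S → S_comp`. -/
theorem existence_attractor_case
    {M : Type*} [MetricSpace M] [CompactSpace M] (φ : ℝ → M → M)
    (hcont : Continuous fun q : ℝ × M => φ q.1 q.2)
    (hφ0 : ∀ x, φ 0 x = x)
    (hφadd : ∀ s t : ℝ, ∀ x, φ s (φ t x) = φ (s + t) x)
    (S : Set M) (hScl : IsClosed S) (hSinv : ∀ t : ℝ, ∀ x ∈ S, φ t x ∈ S)
    (hSne : S.Nonempty) (hcompne : (dynComp φ S).Nonempty)
    (B : Set M) (hBcomp : IsCompact B) (hBnbhd : B = closure (interior B))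
    (hBiso : dynComp φ S ⊆ interior B) (hBinv : maxInv φ B = dynComp φ S)
    (hBS : B ∩ S = ∅)
    (hBbwd : ∀ x ∈ B, ∀ t : ℝ, t ≤ 0 → φ t x ∈ B)
    (hBne : (B \ dynComp φ S).Nonempty) :
    (∃ x : M, x ∉ S ∧ x ∉ dynComp φ S ∧
      alphaSet φ x ⊆ dynComp φ S ∧ (omegaSet φ x ∩ S).Nonempty) ∧
    ¬ ∃ x : M, x ∉ dynComp φ S ∧
      (alphaSet φ x ∩ S).Nonempty ∧ omegaSet φ x ⊆ dynComp φ S := by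
  have hBcl : IsClosed B := hBcomp.isClosed
  constructor
  · obtain ⟨x, hxB, hxC⟩ := hBne
    have hback : ∀ r : ℝ, r ≤ (0:ℝ) → φ r x ∈ B := fun r hr => hBbwd x hxB r hr
    have halphaB : alphaSet φ x ⊆ B := alpha_sub hBcl hback
    have halphaC : alphaSet φ x ⊆ dynComp φ S := by
      intro y hy
      rw [← hBinv]
      exact ⟨halphaB hy, fun t => halphaB (alpha_inv hcont hφadd hy t)⟩
    have hxS : x ∉ S := fun hxS => (eq_empty_iff_forall_notMem.1 hBS) x ⟨hxB, hxS⟩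
    have halphaS : alphaSet φ x ∩ S = ∅ := by
      apply eq_empty_iff_forall_notMem.2
      rintro y ⟨hy, hyS⟩
      exact (eq_empty_iff_forall_notMem.1 hBS) y ⟨halphaB hy, hyS⟩
    refine ⟨x, hxS, hxC, halphaC, ?_⟩
    rw [nonempty_iff_ne_empty]
    intro homega
    exact hxC ⟨halphaS, homega⟩
  · rintro ⟨x, hxC, ⟨y, hyA, hyS⟩, homega⟩
    obtain ⟨z, hz⟩ := omega_nonempty φ x
    have hzB : z ∈ interior B := hBiso (homega hz)
    obtain ⟨u, hu, hconv⟩ := hz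
    have hev : ∀ᶠ k in atTop, φ (u k) x ∈ interior B :=
      hconv.eventually (isOpen_interior.mem_nhds hzB)
    obtain ⟨k, hk⟩ := hev.exists
    have hback : ∀ r : ℝ, r ≤ u k → φ r x ∈ B := by
      intro r hr
      have := hBbwd (φ (u k) x) (interior_subset hk) (r - u k) (by linarith)
      rwa [hφadd, sub_add_cancel] at this
    have : y ∈ B := alpha_sub hBcl hback hyA
    exact (eq_empty_iff_forall_notMem.1 hBS) y ⟨this, hyS⟩
end
end

section
/- Under the extended flow φ̂ on Ĥ, every point of b⁻ = {(1, r⁻(1,x)) : x ∈ B⁻} is an equilibrium, and for every x ∈ B⁻ the ω-limit under φ̂ is the single point (1, r⁻(1,x)); in particular b⁻ is an attractor and, symmetrically, b⁺ is a repeller for φ̂. -/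
/- A point `x` of `B⁻` has exit time `0`, so for `t ≥ 0` its `φ̂`-orbit runs along the collar as
`(s, r⁻(s,x))` with `s = 1 - e^{-t} → 1` inside `[0, 1]`; continuity of `r⁻` at `s = 1` carries it
to `(1, r⁻(1,x))`. A collar point `(s, r⁻(s,x))` with `s < 1` lies on that orbit, shifted in time
by `-log (1 - s)`. The entrance side is the same argument in backward time. -/

open Filter Set Topology

noncomputable section

/-- Times `t ≥ 0` such that the forward orbit segment `φ([0,t],x)` stays in `B`;
its supremum is the exit time `T₊(x)`. -/
def fwdSet {M : Type*} (φ : ℝ → M → M) (B : Set M) (x : M) : Set ℝ :=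
  {t : ℝ | 0 ≤ t ∧ ∀ s ∈ Set.Icc 0 t, φ s x ∈ B}

/-- Times `t ≤ 0` such that the backward orbit segment `φ([t,0],x)` stays in `B`;
its infimum is the entrance time `T₋(x)`. -/
def bwdSet {M : Type*} (φ : ℝ → M → M) (B : Set M) (x : M) : Set ℝ :=
  {t : ℝ | t ≤ 0 ∧ ∀ s ∈ Set.Icc t 0, φ s x ∈ B}

/-- The extended phase space `Ĥ = (B ∪ β⁺ ∪ β⁻)/∼`, realized inside `ℝ × M`:
the block `B` sits at collar coordinate `0`, the exit collar `β⁻` is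
`{(s, r⁻(s,x)) : s ∈ [0,1], x ∈ B⁻}` and the entrance collar `β⁺` is
`{(−s, r⁺(s,x)) : s ∈ [0,1], x ∈ B⁺}`; the gluing of `{0} × ∂B` to `∂B` is
automatic in these coordinates. -/
def extSpace {M : Type*} (B Bp Bm : Set M) (rp rm : ℝ → M → M) : Set (ℝ × M) :=
  ({(0:ℝ)} ×ˢ B) ∪
    {q | ∃ s ∈ Set.Icc (0:ℝ) 1, ∃ x ∈ Bm, q = (s, rm s x)} ∪
    {q | ∃ s ∈ Set.Icc (0:ℝ) 1, ∃ x ∈ Bp, q = (-s, rp s x)}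

theorem tendsto_one_sub_exp_neg_atTop :
    Tendsto (fun t : ℝ => 1 - Real.exp (-t)) atTop (𝓝[Icc 0 1] 1) := by
  refine tendsto_nhdsWithin_iff.2 ⟨?_, (eventually_ge_atTop 0).mono fun t ht => ⟨?_, ?_⟩⟩
  · simpa using Real.tendsto_exp_neg_atTop_nhds_zero.const_sub 1
  · exact sub_nonneg.2 (Real.exp_le_one_iff.2 (neg_nonpos.2 ht))
  · exact sub_le_self _ (Real.exp_pos _).le

theorem tendsto_one_sub_exp_atBot :
    Tendsto (fun t : ℝ => 1 - Real.exp t) atBot (𝓝[Icc 0 1] 1) := by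
  simpa [Function.comp_def] using tendsto_one_sub_exp_neg_atTop.comp tendsto_neg_atBot_atTop

section Collar

variable {M : Type*} [TopologicalSpace M] {r : ℝ → M → M} {S : Set M} {x : M}

theorem tendsto_apply_of_tendsto_nhdsWithin_Icc {α : Type*} {l : Filter α} {σ : α → ℝ}
    (hr : ContinuousOn (fun q : ℝ × M => r q.1 q.2) (Icc 0 1 ×ˢ S)) (hx : x ∈ S)
    (hσ : Tendsto σ l (𝓝[Icc 0 1] 1)) :
    Tendsto (fun a => r (σ a) x) l (𝓝 (r 1 x)) := by
  have hσx : Tendsto (fun a => (σ a, x)) l (𝓝[Icc 0 1 ×ˢ S] (1, x)) := by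
    rw [nhdsWithin_prod_eq]
    exact hσ.prodMk (tendsto_nhdsWithin_iff.2 ⟨tendsto_const_nhds, .of_forall fun _ => hx⟩)
  exact (hr (1, x) ⟨right_mem_Icc.2 zero_le_one, hx⟩).tendsto.comp hσx

theorem tendsto_exitCollar_atTop
    (hr : ContinuousOn (fun q : ℝ × M => r q.1 q.2) (Icc 0 1 ×ˢ S)) (hx : x ∈ S) :
    Tendsto (fun t : ℝ => (1 - Real.exp (-t), r (1 - Real.exp (-t)) x)) atTop
      (𝓝 (1, r 1 x)) :=
  (tendsto_nhdsWithin_iff.1 tendsto_one_sub_exp_neg_atTop).1.prodMk_nhds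
    (tendsto_apply_of_tendsto_nhdsWithin_Icc hr hx tendsto_one_sub_exp_neg_atTop)

theorem tendsto_entranceCollar_atBot
    (hr : ContinuousOn (fun q : ℝ × M => r q.1 q.2) (Icc 0 1 ×ˢ S)) (hx : x ∈ S) :
    Tendsto (fun t : ℝ => (-(1 - Real.exp t), r (1 - Real.exp t) x)) atBot
      (𝓝 (-1, r 1 x)) :=
  (tendsto_nhdsWithin_iff.1 tendsto_one_sub_exp_atBot).1.neg.prodMk_nhds
    (tendsto_apply_of_tendsto_nhdsWithin_Icc hr hx tendsto_one_sub_exp_atBot)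

end Collar

theorem ersatz_infinity_attractor_repeller_general
    {M : Type*} [TopologicalSpace M] (φ : ℝ → M → M)
    (hφ0 : ∀ x, φ 0 x = x)
    -- `B` is an isolating block with entrance set `Bp = B⁺` and exit set `Bm = B⁻`
    (B Bp Bm : Set M)
    (hBpB : Bp ⊆ B) (hBmB : Bm ⊆ B)
    (hBmexit : ∀ x ∈ Bm, fwdSet φ B x = {0})
    (hBpenter : ∀ x ∈ Bp, bwdSet φ B x = {0})
    -- `r±` are injective strong deformation retractions of `B±` onto `b±`
    (rp rm : ℝ → M → M)
    (hrpcont : ContinuousOn (fun q : ℝ × M => rp q.1 q.2) (Set.Icc 0 1 ×ˢ Bp))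
    (hrmcont : ContinuousOn (fun q : ℝ × M => rm q.1 q.2) (Set.Icc 0 1 ×ˢ Bm))
    -- exit and entrance times `T₊`, `T₋` (where they are finite)
    (Tp Tm : M → ℝ)
    (hTp : ∀ x ∈ B, BddAbove (fwdSet φ B x) → IsLUB (fwdSet φ B x) (Tp x))
    (hTm : ∀ x ∈ B, BddBelow (bwdSet φ B x) → IsGLB (bwdSet φ B x) (Tm x))
    -- the extended flow `Φ = φ̂`, defined piecewise
    (Φ : ℝ → ℝ × M → ℝ × M)
    (hΦexit : ∀ x ∈ B, BddAbove (fwdSet φ B x) → ∀ t : ℝ, Tp x ≤ t →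
      Φ t (0, x) =
        (1 - Real.exp (Tp x - t), rm (1 - Real.exp (Tp x - t)) (φ (Tp x) x)))
    (hΦenter : ∀ x ∈ B, BddBelow (bwdSet φ B x) → ∀ t : ℝ, t ≤ Tm x →
      Φ t (0, x) =
        (-(1 - Real.exp (t - Tm x)), rp (1 - Real.exp (t - Tm x)) (φ (Tm x) x)))
    (hΦm : ∀ s ∈ Set.Ico (0:ℝ) 1, ∀ x ∈ Bm, ∀ t : ℝ,
      Φ t (s, rm s x) = Φ (t - Real.log (1 - s)) (0, x))
    (hΦm1 : ∀ x ∈ Bm, ∀ t : ℝ, Φ t (1, rm 1 x) = (1, rm 1 x))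
    (hΦp : ∀ s ∈ Set.Ico (0:ℝ) 1, ∀ x ∈ Bp, ∀ t : ℝ,
      Φ t (-s, rp s x) = Φ (t + Real.log (1 - s)) (0, x))
    (hΦp1 : ∀ x ∈ Bp, ∀ t : ℝ, Φ t (-1, rp 1 x) = (-1, rp 1 x))
    :
    (∀ x ∈ Bm, ∀ t : ℝ, Φ t (1, rm 1 x) = (1, rm 1 x)) ∧
    (∀ x ∈ Bm, Tendsto (fun t : ℝ => Φ t (0, x)) atTop (nhds (1, rm 1 x))) ∧
    (∀ x ∈ Bm, ∀ s ∈ Set.Icc (0:ℝ) 1,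
      Tendsto (fun t : ℝ => Φ t (s, rm s x)) atTop (nhds (1, rm 1 x))) ∧
    (∀ x ∈ Bp, ∀ t : ℝ, Φ t (-1, rp 1 x) = (-1, rp 1 x)) ∧
    (∀ x ∈ Bp, Tendsto (fun t : ℝ => Φ t (0, x)) atBot (nhds (-1, rp 1 x))) ∧
    (∀ x ∈ Bp, ∀ s ∈ Set.Icc (0:ℝ) 1,
      Tendsto (fun t : ℝ => Φ t (-s, rp s x)) atBot (nhds (-1, rp 1 x))) := by
  have exit_orbit : ∀ x ∈ Bm, Tendsto (fun t : ℝ => Φ t (0, x)) atTop (𝓝 (1, rm 1 x)) := by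
    intro x hx
    have hbdd : BddAbove (fwdSet φ B x) := hBmexit x hx ▸ bddAbove_singleton
    have hT : Tp x = 0 := (hBmexit x hx ▸ hTp x (hBmB hx) hbdd).unique isLUB_singleton
    refine (tendsto_exitCollar_atTop hrmcont hx).congr' ?_
    filter_upwards [eventually_ge_atTop 0] with t ht
    simpa [hT, hφ0] using (hΦexit x (hBmB hx) hbdd t (hT ▸ ht)).symm
  have entrance_orbit :
      ∀ x ∈ Bp, Tendsto (fun t : ℝ => Φ t (0, x)) atBot (𝓝 (-1, rp 1 x)) := by
    intro x hx
    have hbdd : BddBelow (bwdSet φ B x) := hBpenter x hx ▸ bddBelow_singleton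
    have hT : Tm x = 0 := (hBpenter x hx ▸ hTm x (hBpB hx) hbdd).unique isGLB_singleton
    refine (tendsto_entranceCollar_atBot hrpcont hx).congr' ?_
    filter_upwards [eventually_le_atBot 0] with t ht
    simpa [hT, hφ0] using (hΦenter x (hBpB hx) hbdd t (hT ▸ ht)).symm
  refine ⟨hΦm1, exit_orbit, fun x hx s hs => ?_, hΦp1, entrance_orbit, fun x hx s hs => ?_⟩
  · rcases hs.2.eq_or_lt with rfl | hs1
    · simp only [hΦm1 x hx, tendsto_const_nhds]
    · simp only [hΦm s ⟨hs.1, hs1⟩ x hx]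
      exact (exit_orbit x hx).comp (tendsto_atTop_add_const_right _ _ tendsto_id)
  · rcases hs.2.eq_or_lt with rfl | hs1
    · simp only [hΦp1 x hx, tendsto_const_nhds]
    · simp only [hΦp s ⟨hs.1, hs1⟩ x hx]
      exact (entrance_orbit x hx).comp (tendsto_atBot_add_const_right _ _ tendsto_id)

/-- Under the extended flow `φ̂`, every point of the ersatz infinity
`b⁻ = {(1, r⁻(1,x)) : x ∈ B⁻}` is an equilibrium and for every `x ∈ B⁻` the
ω-limit of `x` under `φ̂` is the single point `(1, r⁻(1,x))`; in particular `b⁻`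
is an attractor and, symmetrically, `b⁺ = {(−1, r⁺(1,x)) : x ∈ B⁺}` consists of
equilibria which are α-limits of the points of `B⁺`, i.e. `b⁺` is a repeller. -/
theorem ersatz_infinity_attractor_repeller
    {M : Type*} [TopologicalSpace M] (φ : ℝ → M → M)
    (hcont : Continuous fun q : ℝ × M => φ q.1 q.2)
    (hφ0 : ∀ x, φ 0 x = x)
    (hφadd : ∀ s t : ℝ, ∀ x, φ s (φ t x) = φ (s + t) x)
    -- `B` is an isolating block with entrance set `Bp = B⁺` and exit set `Bm = B⁻`
    (B Bp Bm bp bm : Set M)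
    (hBcomp : IsCompact B) (hBnbhd : B = closure (interior B))
    (hBiso : maxInv φ B ⊆ interior B)
    (hBpfr : Bp ⊆ frontier B) (hBmfr : Bm ⊆ frontier B)
    (hBpB : Bp ⊆ B) (hBmB : Bm ⊆ B)
    (hBmexit : ∀ x ∈ Bm, fwdSet φ B x = {0})
    (hBpenter : ∀ x ∈ Bp, bwdSet φ B x = {0})
    -- `r±` are injective strong deformation retractions of `B±` onto `b±`
    (rp rm : ℝ → M → M)
    (hrpcont : ContinuousOn (fun q : ℝ × M => rp q.1 q.2) (Set.Icc 0 1 ×ˢ Bp))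
    (hrmcont : ContinuousOn (fun q : ℝ × M => rm q.1 q.2) (Set.Icc 0 1 ×ˢ Bm))
    (hrp0 : ∀ x ∈ Bp, rp 0 x = x) (hrm0 : ∀ x ∈ Bm, rm 0 x = x)
    (hrpmaps : ∀ s ∈ Set.Icc (0:ℝ) 1, ∀ x ∈ Bp, rp s x ∈ Bp)
    (hrmmaps : ∀ s ∈ Set.Icc (0:ℝ) 1, ∀ x ∈ Bm, rm s x ∈ Bm)
    (hrp1 : ∀ x ∈ Bp, rp 1 x ∈ bp) (hrm1 : ∀ x ∈ Bm, rm 1 x ∈ bm)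
    (hrpfix : ∀ s ∈ Set.Icc (0:ℝ) 1, ∀ x ∈ bp, rp s x = x)
    (hrmfix : ∀ s ∈ Set.Icc (0:ℝ) 1, ∀ x ∈ bm, rm s x = x)
    (hrpinj : ∀ s ∈ Set.Ico (0:ℝ) 1, Set.InjOn (rp s) Bp)
    (hrminj : ∀ s ∈ Set.Ico (0:ℝ) 1, Set.InjOn (rm s) Bm)
    -- exit and entrance times `T₊`, `T₋` (where they are finite)
    (Tp Tm : M → ℝ)
    (hTp : ∀ x ∈ B, BddAbove (fwdSet φ B x) → IsLUB (fwdSet φ B x) (Tp x))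
    (hTm : ∀ x ∈ B, BddBelow (bwdSet φ B x) → IsGLB (bwdSet φ B x) (Tm x))
    (hexit : ∀ x ∈ B, BddAbove (fwdSet φ B x) → φ (Tp x) x ∈ Bm)
    (henter : ∀ x ∈ B, BddBelow (bwdSet φ B x) → φ (Tm x) x ∈ Bp)
    -- the extended flow `Φ = φ̂`, defined piecewise
    (Φ : ℝ → ℝ × M → ℝ × M)
    (hΦin : ∀ x ∈ B, ∀ t : ℝ,
      ((0 ≤ t ∧ ∀ s ∈ Set.Icc 0 t, φ s x ∈ B) ∨
        (t ≤ 0 ∧ ∀ s ∈ Set.Icc t 0, φ s x ∈ B)) →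
      Φ t (0, x) = (0, φ t x))
    (hΦexit : ∀ x ∈ B, BddAbove (fwdSet φ B x) → ∀ t : ℝ, Tp x ≤ t →
      Φ t (0, x) =
        (1 - Real.exp (Tp x - t), rm (1 - Real.exp (Tp x - t)) (φ (Tp x) x)))
    (hΦenter : ∀ x ∈ B, BddBelow (bwdSet φ B x) → ∀ t : ℝ, t ≤ Tm x →
      Φ t (0, x) =
        (-(1 - Real.exp (t - Tm x)), rp (1 - Real.exp (t - Tm x)) (φ (Tm x) x)))
    (hΦm : ∀ s ∈ Set.Ico (0:ℝ) 1, ∀ x ∈ Bm, ∀ t : ℝ,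
      Φ t (s, rm s x) = Φ (t - Real.log (1 - s)) (0, x))
    (hΦm1 : ∀ x ∈ Bm, ∀ t : ℝ, Φ t (1, rm 1 x) = (1, rm 1 x))
    (hΦp : ∀ s ∈ Set.Ico (0:ℝ) 1, ∀ x ∈ Bp, ∀ t : ℝ,
      Φ t (-s, rp s x) = Φ (t + Real.log (1 - s)) (0, x))
    (hΦp1 : ∀ x ∈ Bp, ∀ t : ℝ, Φ t (-1, rp 1 x) = (-1, rp 1 x))
    :
    (∀ x ∈ Bm, ∀ t : ℝ, Φ t (1, rm 1 x) = (1, rm 1 x)) ∧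
    (∀ x ∈ Bm, Tendsto (fun t : ℝ => Φ t (0, x)) atTop (nhds (1, rm 1 x))) ∧
    (∀ x ∈ Bm, ∀ s ∈ Set.Icc (0:ℝ) 1,
      Tendsto (fun t : ℝ => Φ t (s, rm s x)) atTop (nhds (1, rm 1 x))) ∧
    (∀ x ∈ Bp, ∀ t : ℝ, Φ t (-1, rp 1 x) = (-1, rp 1 x)) ∧
    (∀ x ∈ Bp, Tendsto (fun t : ℝ => Φ t (0, x)) atBot (nhds (-1, rp 1 x))) ∧
    (∀ x ∈ Bp, ∀ s ∈ Set.Icc (0:ℝ) 1,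
      Tendsto (fun t : ℝ => Φ t (-s, rp s x)) atBot (nhds (-1, rp 1 x))) :=
  ersatz_infinity_attractor_repeller_general φ hφ0 B Bp Bm hBpB hBmB hBmexit hBpenter rp rm hrpcont
    hrmcont Tp Tm hTp hTm Φ hΦexit hΦenter hΦm hΦm1 hΦp hΦp1
end
end

section
/- (Finite collections.) Let S₁,…,Sₙ be pairwise disjoint closed invariant sets, each with isolated invariant dynamical complement S_{i,comp}. Then the disjoint union S = ⋃ᵢ Sᵢ is a closed invariant set whose dynamical complement is S_comp = ⋂ᵢ S_{i,comp}, and this intersection is isolated invariant. -/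
open Filter Set Topology

noncomputable section

/-!
The dynamical complement of a union is the intersection of the dynamical complements, since a
limit set misses `⋃ i, Sᵢ` iff it misses every `Sᵢ`. For isolation, intersect isolating
neighbourhoods `Kᵢ` of the `S_{i,comp}`: maximal invariant sets commute with intersections, and
finiteness keeps `⋂ i, interior Kᵢ` open. Replacing `⋂ i, Kᵢ` by the closure of its interior
makes it regular closed without changing its maximal invariant set, which lies in the interior.
-/

section MaxInv

variable {M : Type*} (φ : ℝ → M → M)

theorem subset_maxInv_of_mapsTo {A K : Set M} (hAK : A ⊆ K) (hA : ∀ t, MapsTo (φ t) A A) :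
    A ⊆ maxInv φ K :=
  fun _ hx => ⟨hAK hx, fun t => hAK (hA t hx)⟩

theorem maxInv_mono {K L : Set M} (h : K ⊆ L) : maxInv φ K ⊆ maxInv φ L :=
  fun _ hx => ⟨h hx.1, fun t => h (hx.2 t)⟩

theorem maxInv_iInter {ι : Sort*} (K : ι → Set M) :
    maxInv φ (⋂ i, K i) = ⋂ i, maxInv φ (K i) := by
  ext
  simp only [maxInv, mem_ofPred_eq, mem_iInter]
  exact ⟨fun h i => ⟨h.1 i, fun t => h.2 t i⟩, fun h => ⟨fun i => (h i).1, fun t i => (h i).2 t⟩⟩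

variable {φ}

theorem mapsTo_maxInv (hφadd : ∀ s t : ℝ, ∀ x, φ s (φ t x) = φ (s + t) x) (K : Set M) (t : ℝ) :
    MapsTo (φ t) (maxInv φ K) (maxInv φ K) :=
  fun x hx => ⟨hx.2 t, fun s => by rw [hφadd]; exact hx.2 (s + t)⟩

variable [TopologicalSpace M]

theorem maxInv_iInter_subset_interior {ι : Type*} [Finite ι] {K : ι → Set M}
    (hK : ∀ i, maxInv φ (K i) ⊆ interior (K i)) :
    maxInv φ (⋂ i, K i) ⊆ interior (⋂ i, K i) := by
  rw [maxInv_iInter, interior_iInter_of_finite]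
  exact iInter_mono hK

theorem maxInv_closure_interior (hφadd : ∀ s t : ℝ, ∀ x, φ s (φ t x) = φ (s + t) x)
    {C : Set M} (hC : IsClosed C) (hiso : maxInv φ C ⊆ interior C) :
    maxInv φ (closure (interior C)) = maxInv φ C :=
  (maxInv_mono φ hC.closure_interior_subset).antisymm <|
    subset_maxInv_of_mapsTo φ (hiso.trans subset_closure) (mapsTo_maxInv hφadd C)

theorem exists_isolating_nbhd_maxInv_iInter [CompactSpace M] {ι : Type*} [Finite ι]
    (hφadd : ∀ s t : ℝ, ∀ x, φ s (φ t x) = φ (s + t) x) {K : ι → Set M}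
    (hK : ∀ i, IsClosed (K i)) (hiso : ∀ i, maxInv φ (K i) ⊆ interior (K i)) :
    ∃ K' : Set M, IsCompact K' ∧ K' = closure (interior K') ∧
      maxInv φ K' ⊆ interior K' ∧ maxInv φ K' = ⋂ i, maxInv φ (K i) := by
  have hC : IsClosed (⋂ i, K i) := isClosed_iInter hK
  have hCiso := maxInv_iInter_subset_interior hiso
  have hmax := maxInv_closure_interior hφadd hC hCiso
  refine ⟨closure (interior (⋂ i, K i)), isClosed_closure.isCompact, closure_interior_idem.symm,
    ?_, hmax.trans (maxInv_iInter φ K)⟩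
  rw [hmax]
  exact hCiso.trans isOpen_interior.subset_interior_closure

end MaxInv

theorem dynComp_iUnion {M : Type*} [TopologicalSpace M] (φ : ℝ → M → M) {ι : Sort*}
    (S : ι → Set M) : dynComp φ (⋃ i, S i) = ⋂ i, dynComp φ (S i) := by
  ext
  simp only [dynComp, mem_ofPred_eq, mem_iInter, inter_iUnion, iUnion_eq_empty]
  exact ⟨fun h i => ⟨h.1 i, h.2 i⟩, fun h => ⟨fun i => (h i).1, fun i => (h i).2⟩⟩

theorem finite_union_dynComp_isolated_general
    {M : Type*} [MetricSpace M] [CompactSpace M] (φ : ℝ → M → M)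
    (hφadd : ∀ s t : ℝ, ∀ x, φ s (φ t x) = φ (s + t) x)
    (n : ℕ) (Si : Fin n → Set M)
    (hcl : ∀ i, IsClosed (Si i))
    (hinv : ∀ i, ∀ t : ℝ, ∀ x ∈ Si i, φ t x ∈ Si i)
    (hiso : ∀ i, ∃ K : Set M, IsCompact K ∧ K = closure (interior K) ∧
      maxInv φ K ⊆ interior K ∧ maxInv φ K = dynComp φ (Si i)) :
    IsClosed (⋃ i, Si i) ∧
    (∀ t : ℝ, ∀ x ∈ ⋃ i, Si i, φ t x ∈ ⋃ i, Si i) ∧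
    dynComp φ (⋃ i, Si i) = ⋂ i, dynComp φ (Si i) ∧
    ∃ K : Set M, IsCompact K ∧ K = closure (interior K) ∧
      maxInv φ K ⊆ interior K ∧ maxInv φ K = ⋂ i, dynComp φ (Si i) := by
  choose K hKc _ hKiso hKmax using hiso
  refine ⟨isClosed_iUnion_of_finite hcl, ?_, dynComp_iUnion φ Si, ?_⟩
  · intro t x hx
    obtain ⟨i, hi⟩ := mem_iUnion.1 hx
    exact mem_iUnion.2 ⟨i, hinv i t x hi⟩
  · simp only [← hKmax]
    exact exists_isolating_nbhd_maxInv_iInter hφadd (fun i => (hKc i).isClosed) hKiso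

/-- Finite collections: if `S₁, …, Sₙ` are pairwise disjoint closed invariant
sets, each of isolated invariant dynamical complement, then their (disjoint)
union `S = ⋃ᵢ Sᵢ` is a closed invariant set whose dynamical complement is
`S_comp = ⋂ᵢ S_{i,comp}`, and this intersection is isolated invariant. -/
theorem finite_union_dynComp_isolated
    {M : Type*} [MetricSpace M] [CompactSpace M] (φ : ℝ → M → M)
    (hcont : Continuous fun q : ℝ × M => φ q.1 q.2)
    (hφ0 : ∀ x, φ 0 x = x)
    (hφadd : ∀ s t : ℝ, ∀ x, φ s (φ t x) = φ (s + t) x)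
    (n : ℕ) (Si : Fin n → Set M)
    (hdisj : ∀ i j, i ≠ j → Si i ∩ Si j = ∅)
    (hcl : ∀ i, IsClosed (Si i))
    (hinv : ∀ i, ∀ t : ℝ, ∀ x ∈ Si i, φ t x ∈ Si i)
    (hiso : ∀ i, ∃ K : Set M, IsCompact K ∧ K = closure (interior K) ∧
      maxInv φ K ⊆ interior K ∧ maxInv φ K = dynComp φ (Si i)) :
    IsClosed (⋃ i, Si i) ∧
    (∀ t : ℝ, ∀ x ∈ ⋃ i, Si i, φ t x ∈ ⋃ i, Si i) ∧
    dynComp φ (⋃ i, Si i) = ⋂ i, dynComp φ (Si i) ∧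
    ∃ K : Set M, IsCompact K ∧ K = closure (interior K) ∧
      maxInv φ K ⊆ interior K ∧ maxInv φ K = ⋂ i, dynComp φ (Si i) :=
  finite_union_dynComp_isolated_general φ hφadd n Si hcl hinv hiso
end
end
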